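/- The dual Banach space F(X)* is linearly isometric to Lip_0(X), via the map T defined by (Tφ)(x) = φ(m_{xe}), whose inverse sends f ∈ Lip_0(X) to the functional m ↦ Σ_{x∈X} f(x) m(x). -/

import Mathlib

/-- A molecule: finitely supported real function summing to zero. -/
def IsMolecule {X : Type*} (m : X →₀ ℝ) : Prop := m.sum (fun _ v => v) = 0

/-- The elementary molecule `m_{pq} = χ_{p} - χ_{q}`. -/
noncomputable def mol {X : Type*} (p q : X) : X →₀ ℝ :=
  Finsupp.single p 1 - Finsupp.single q 1

/-- The Arens-Eells seminorm. -/
noncomputable def aeNorm {X : Type*} [MetricSpace X] (m : X →₀ ℝ) : ℝ :=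
  sInf { c | ∃ (n : ℕ) (a : Fin n → ℝ) (p q : Fin n → X),
    m = ∑ i, a i • mol (p i) (q i) ∧ c = ∑ i, |a i| * dist (p i) (q i) }

/-!
Every molecule `m` equals `Σ_x m(x) m_{xe}`, so on molecules a linear functional is determined by
its values `φ(m_{xe})`. The functional `m ↦ Σ_x f(x) m(x)` takes the value `f p - f q` on `m_{pq}`,
whose Arens-Eells norm is at most `d(p, q)`: testing on `m_{pq}` turns a bound `K ‖m‖` into
`K`-Lipschitzness, and conversely the Lipschitz bound applied term by term to a representation
`m = Σ_i a_i m_{p_i q_i}` bounds the functional by `K` times the cost `Σ_i |a_i| d(p_i, q_i)`.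
-/

section

variable {X : Type*}

theorem linearCombination_mol (f : X → ℝ) (p q : X) :
    Finsupp.linearCombination ℝ f (mol p q) = f p - f q := by
  simp [mol, Finsupp.linearCombination_single]

theorem isMolecule_mol (p q : X) : IsMolecule (mol p q) := by
  classical
  simp [IsMolecule, mol, Finsupp.sum_sub_index, Finsupp.sum_single_index]

theorem IsMolecule.linearCombination_mol {m : X →₀ ℝ} (hm : IsMolecule m) (e : X) :
    Finsupp.linearCombination ℝ (fun x => mol x e) m = m := by
  have hsum : Finsupp.single e (m.sum fun _ v => v) = 0 := by rw [hm, Finsupp.single_zero]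
  simp only [mol, Finsupp.linearCombination_apply, smul_sub, Finsupp.sum_sub, Finsupp.smul_single,
    smul_eq_mul, mul_one, ← Finsupp.single_sum, hsum, sub_zero, Finsupp.sum_single]

theorem IsMolecule.exists_eq_sum_smul_mol {m : X →₀ ℝ} (hm : IsMolecule m) (e : X) :
    ∃ (n : ℕ) (a : Fin n → ℝ) (p : Fin n → X), m = ∑ i, a i • mol (p i) e := by
  classical
  let σ := m.support.equivFin
  refine ⟨m.support.card, fun i => m (σ.symm i), fun i => σ.symm i, ?_⟩
  conv_lhs => rw [← hm.linearCombination_mol e, Finsupp.linearCombination_apply, Finsupp.sum,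
    ← Finset.sum_coe_sort]
  exact (σ.symm.sum_comp fun x : m.support => m x • mol (x : X) e).symm

end

section

variable {X : Type*} [MetricSpace X]

def aeCosts (m : X →₀ ℝ) : Set ℝ :=
  { c | ∃ (n : ℕ) (a : Fin n → ℝ) (p q : Fin n → X),
    m = ∑ i, a i • mol (p i) (q i) ∧ c = ∑ i, |a i| * dist (p i) (q i) }

theorem aeNorm_eq_sInf_aeCosts (m : X →₀ ℝ) : aeNorm m = sInf (aeCosts m) := rfl

theorem aeCosts_nonempty {m : X →₀ ℝ} (hm : IsMolecule m) (e : X) : (aeCosts m).Nonempty := by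
  obtain ⟨n, a, p, hrep⟩ := hm.exists_eq_sum_smul_mol e
  exact ⟨_, n, a, p, fun _ => e, hrep, rfl⟩

theorem aeCosts_bddBelow (m : X →₀ ℝ) : BddBelow (aeCosts m) := by
  refine ⟨0, ?_⟩
  rintro - ⟨n, a, p, q, -, rfl⟩
  exact Finset.sum_nonneg fun i _ => mul_nonneg (abs_nonneg _) dist_nonneg

theorem aeNorm_mol_le (p q : X) : aeNorm (mol p q) ≤ dist p q :=
  csInf_le (aeCosts_bddBelow _) ⟨1, fun _ => 1, fun _ => p, fun _ => q, by simp, by simp⟩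

theorem le_mul_aeNorm {m : X →₀ ℝ} (hne : (aeCosts m).Nonempty) {b K : ℝ} (hK : 0 ≤ K)
    (h : ∀ c ∈ aeCosts m, b ≤ K * c) : b ≤ K * aeNorm m := by
  rw [aeNorm_eq_sInf_aeCosts, ← smul_eq_mul, ← Real.sInf_smul_of_nonneg hK]
  exact le_csInf hne.smul_set (Set.forall_mem_image.2 h)

theorem LipschitzWith.abs_linearCombination_le {f : X → ℝ} {K : NNReal} (hf : LipschitzWith K f)
    {m : X →₀ ℝ} {c : ℝ} (hc : c ∈ aeCosts m) :
    |Finsupp.linearCombination ℝ f m| ≤ K * c := by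
  obtain ⟨n, a, p, q, rfl, rfl⟩ := hc
  simp only [map_sum, map_smul, linearCombination_mol, smul_eq_mul, Finset.mul_sum]
  refine (Finset.abs_sum_le_sum_abs _ _).trans (Finset.sum_le_sum fun i _ => ?_)
  calc |a i * (f (p i) - f (q i))| = |a i| * dist (f (p i)) (f (q i)) := by
        rw [abs_mul, Real.dist_eq]
    _ ≤ |a i| * (K * dist (p i) (q i)) := by gcongr; exact hf.dist_le_mul _ _
    _ = K * (|a i| * dist (p i) (q i)) := by ring

theorem lipschitzWith_iff_abs_linearCombination_le [Nonempty X] (f : X → ℝ) (K : NNReal) :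
    LipschitzWith K f ↔ ∀ m : X →₀ ℝ, IsMolecule m →
      |Finsupp.linearCombination ℝ f m| ≤ K * aeNorm m := by
  refine ⟨fun hf m hm => le_mul_aeNorm (aeCosts_nonempty hm (Classical.arbitrary X)) K.coe_nonneg
    fun c => hf.abs_linearCombination_le, fun h => LipschitzWith.of_dist_le_mul fun x y => ?_⟩
  calc dist (f x) (f y) = |Finsupp.linearCombination ℝ f (mol x y)| := by
        rw [linearCombination_mol, Real.dist_eq]
    _ ≤ K * aeNorm (mol x y) := h _ (isMolecule_mol x y)
    _ ≤ K * dist x y := by gcongr; exact aeNorm_mol_le x y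

end

/-- Parts (1) and (2) say that `S f = Finsupp.linearCombination ℝ f` is an isometry of `Lip₀(X)`
into the dual with left inverse `T φ = fun x => φ (mol x e)`; part (3) says `S ∘ T` is the identity
on bounded functionals (restricted to molecules). -/
theorem free_space_dual_eq_lip0 {X : Type*} [MetricSpace X] (e : X) :
    (∀ (f : X → ℝ) (K : NNReal), f e = 0 →
      (LipschitzWith K f ↔
        ∀ m : X →₀ ℝ, IsMolecule m →
          |Finsupp.linearCombination ℝ f m| ≤ (K : ℝ) * aeNorm m)) ∧
    (∀ f : X → ℝ, f e = 0 → ∀ x : X,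
      Finsupp.linearCombination ℝ f (mol x e) = f x) ∧
    (∀ φ : (X →₀ ℝ) →ₗ[ℝ] ℝ,
      (∃ C : ℝ, ∀ m : X →₀ ℝ, IsMolecule m → |φ m| ≤ C * aeNorm m) →
      ∀ m : X →₀ ℝ, IsMolecule m →
        φ m = Finsupp.linearCombination ℝ (fun x => φ (mol x e)) m) := by
  have : Nonempty X := ⟨e⟩
  refine ⟨fun f K _ => lipschitzWith_iff_abs_linearCombination_le f K, ?_, ?_⟩
  · intro f hfe x
    rw [linearCombination_mol, hfe, sub_zero]
  · intro φ _ m hm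
    rw [← Function.comp_def φ, ← Finsupp.apply_linearCombination, hm.linearCombination_mol]
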